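/- Under the Setup with standing assumption (†) and optimality assumptions (O1)–(O2): if z is a solo vertex, y ∈ S_z* is a useful solo neighbor of z, and z is movable to the class β̃ for some β ∈ Φ, then the digraph H contains no directed path from β to f(y). -/

import Mathlib

/-!
Suppose `H` had a path from `β` to `f(y)`; take one without repeated colors, with witnesses
`x_j` of its arcs. Every color on it is inaccessible, hence full, while every accessible class
other than that of `z` is light.

If `z` is movable to the class of some accessible `μ ≠ f(z)`, move `z` there, `y` into the
class of `f(z)` (its only neighbor there was `z`) and every `x_j` one step along the path. The
result is SE, the class of `β` becomes light, and every accessible color stays accessible: the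
class of `f(z)` reaches `β` by moving `y` and the `x_j` back, and `μ` by moving `z` to `β`.
So `|A|` grows by one.

Otherwise move `z` to the class of `β` instead. This closes a cycle and keeps all class sizes.
The class of `f(z)` stays accessible, since the first arc of its old path to a light class is
witnessed by a vertex other than `z`. A solo neighbor `y'` of `z` not adjacent to `y` now only
sees `y` in the class of `f(z)`, so its color, which was inaccessible, becomes accessible, and
again `|A|` grows. Both cases contradict (O1).
-/

open Finset

namespace EqListColoring

open scoped Classical

/-- `n mod* r` : the unique `i ∈ {1, …, r}` with `r ∣ n - i` (for `n, r ≥ 1`). -/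
def modStar (n r : ℕ) : ℕ := if n % r = 0 then r else n % r

variable {V : Type*}

/-- `s = ⌈|V(G')|/r⌉ = ⌈(|V| - 1)/r⌉`, the maximum allowed class size. -/
noncomputable def sVal (V : Type*) [Fintype V] (r : ℕ) : ℕ :=
  ⌈((Fintype.card V - 1 : ℕ) : ℚ) / r⌉₊

/-- The class `γ̃ = f⁻¹(γ)` of color `γ` in the coloring `f` of `G' = G - p`. -/
noncomputable def classOf [Fintype V] [DecidableEq V] (p : V) (f : V → ℕ) (γ : ℕ) : Finset V :=
  (Finset.univ.erase p).filter (fun v => f v = γ)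

/-- `Γ`, the union of all lists. -/
noncomputable def colorSet [Fintype V] (L : V → Finset ℕ) : Finset ℕ :=
  Finset.univ.biUnion L

/-- `x` is movable to the class `γ̃`: `γ ∈ L(x)` and `x` has no neighbor in `γ̃`. -/
def MovableTo [Fintype V] [DecidableEq V] (G : SimpleGraph V) (L : V → Finset ℕ)
    (p : V) (f : V → ℕ) (x : V) (γ : ℕ) : Prop :=
  γ ∈ L x ∧ ∀ y ∈ classOf p f γ, ¬ G.Adj x y

/-- The arcs of the auxiliary digraph `H` on the colors: `α → β` iff `α ≠ β` and
some vertex of the class `α̃` is movable to `β̃`. -/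
def Arc [Fintype V] [DecidableEq V] (G : SimpleGraph V) (L : V → Finset ℕ)
    (p : V) (f : V → ℕ) (α β : ℕ) : Prop :=
  α ≠ β ∧ ∃ x ∈ classOf p f α, MovableTo G L p f x β

/-- A color `γ ∈ Γ` is accessible if `H` has a (possibly trivial) directed path
from `γ` to a color of `Γ` whose class is light. -/
def Accessible [Fintype V] [DecidableEq V] (G : SimpleGraph V) (L : V → Finset ℕ)
    (p : V) (f : V → ℕ) (s γ : ℕ) : Prop :=
  γ ∈ colorSet L ∧ ∃ δ ∈ colorSet L,
    Relation.ReflTransGen (Arc G L p f) γ δ ∧ (classOf p f δ).card < s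

/-- `Λ`, the set of accessible colors. -/
noncomputable def lamSet [Fintype V] [DecidableEq V] (G : SimpleGraph V) (L : V → Finset ℕ)
    (p : V) (f : V → ℕ) (s : ℕ) : Finset ℕ :=
  (colorSet L).filter (Accessible G L p f s)

/-- `Φ = Γ ∖ Λ`, the set of inaccessible colors. -/
noncomputable def phiSet [Fintype V] [DecidableEq V] (G : SimpleGraph V) (L : V → Finset ℕ)
    (p : V) (f : V → ℕ) (s : ℕ) : Finset ℕ :=
  colorSet L \ lamSet G L p f s

/-- `A = ⋃_{λ ∈ Λ} λ̃`. -/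
noncomputable def aSet [Fintype V] [DecidableEq V] (G : SimpleGraph V) (L : V → Finset ℕ)
    (p : V) (f : V → ℕ) (s : ℕ) : Finset V :=
  (lamSet G L p f s).biUnion (classOf p f)

/-- `B = ⋃_{φ ∈ Φ} φ̃`. -/
noncomputable def bSet [Fintype V] [DecidableEq V] (G : SimpleGraph V) (L : V → Finset ℕ)
    (p : V) (f : V → ℕ) (s : ℕ) : Finset V :=
  (phiSet G L p f s).biUnion (classOf p f)

/-- `f` is a strongly equitable (SE) `L`-coloring of `G' = G - p`:
a proper coloring of `G - p` from the lists in which every class has size at most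
`s = ⌈(|V|-1)/r⌉` and at most `(|V|-1) mod* r` classes have size exactly `s`. -/
def IsSE [Fintype V] [DecidableEq V] (G : SimpleGraph V) (r : ℕ) (L : V → Finset ℕ)
    (p : V) (f : V → ℕ) : Prop :=
  (∀ v, v ≠ p → f v ∈ L v) ∧
  (∀ u v, u ≠ p → v ≠ p → G.Adj u v → f u ≠ f v) ∧
  (∀ γ : ℕ, (classOf p f γ).card ≤ sVal V r) ∧
  ((colorSet L).filter (fun γ => (classOf p f γ).card = sVal V r)).card
    ≤ modStar (Fintype.card V - 1) r

/-- The set-up of the proof of the main theorem: `r ≥ 9`, `G` is a graph in class ℬ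
on at least two vertices with `Δ(G) ≤ r`, `L` is an `r`-list assignment for `G`,
`p` is a vertex of minimum degree, `f` is an SE `L`-coloring of `G' = G - p`, and
(†) `p` is not movable to the class of any accessible color. -/
structure Setup (V : Type*) [Fintype V] [DecidableEq V] where
  G : SimpleGraph V
  r : ℕ
  L : V → Finset ℕ
  p : V
  f : V → ℕ
  hr : 9 ≤ r
  hB : ∀ X Y : Finset V, Disjoint X Y → 3 ≤ (X ∪ Y).card →
      ((X ×ˢ Y).filter (fun e => G.Adj e.1 e.2)).card ≤ 2 * (X ∪ Y).card - 4
  hΔ : ∀ v, (Finset.univ.filter (fun u => G.Adj v u)).card ≤ r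
  hV : 2 ≤ Fintype.card V
  hL : ∀ v, (L v).card = r
  hpmin : ∀ v, (Finset.univ.filter (fun u => G.Adj p u)).card
      ≤ (Finset.univ.filter (fun u => G.Adj v u)).card
  hSE : IsSE G r L p f
  hdagger : ∀ γ : ℕ, Accessible G L p f (sVal V r) γ → ¬ MovableTo G L p f p γ

namespace Setup

variable [Fintype V] [DecidableEq V] (S : Setup V)

/-- The maximum allowed class size `s`. -/
noncomputable def s : ℕ := sVal V S.r

/-- The class `γ̃` of a color `γ`. -/
noncomputable def cls (γ : ℕ) : Finset V := classOf S.p S.f γ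

/-- The color set `Γ`. -/
noncomputable def Γ : Finset ℕ := colorSet S.L

/-- The set `Λ` of accessible colors. -/
noncomputable def Λ : Finset ℕ := lamSet S.G S.L S.p S.f S.s

/-- The set `Φ = Γ ∖ Λ` of inaccessible colors. -/
noncomputable def Φ : Finset ℕ := phiSet S.G S.L S.p S.f S.s

/-- `b = |Φ|`. -/
noncomputable def b : ℕ := S.Φ.card

/-- `a = r - b`. -/
noncomputable def 𝒶 : ℕ := S.r - S.b

/-- `A = ⋃_{λ ∈ Λ} λ̃`. -/
noncomputable def A : Finset V := aSet S.G S.L S.p S.f S.s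

/-- `B = ⋃_{φ ∈ Φ} φ̃`. -/
noncomputable def B : Finset V := bSet S.G S.L S.p S.f S.s

/-- `‖z, X‖`, the number of neighbors of `z` in `X`. -/
noncomputable def nbr (z : V) (X : Finset V) : ℕ := (X.filter (fun y => S.G.Adj z y)).card

/-- `y` is a solo neighbor of `z`: `y` is adjacent to `z`, `f(z) ∈ L(y)` and `z` is
the unique neighbor of `y` in the class of `f(z)`. -/
def SoloNbr (z y : V) : Prop :=
  S.G.Adj z y ∧ S.f z ∈ S.L y ∧ ∀ w ∈ S.cls (S.f z), S.G.Adj y w → w = z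

/-- `S_z`, the set of solo neighbors `y ∈ B` of `z`. -/
noncomputable def soloSet (z : V) : Finset V := S.B.filter (fun y => S.SoloNbr z y)

/-- `z ∈ A` is a solo vertex: `S_z ≠ ∅` and if some class of an accessible color is
full then that class is the class of `z`. -/
def SoloVertex (z : V) : Prop :=
  z ∈ S.A ∧ (S.soloSet z).Nonempty ∧ ∀ γ ∈ S.Λ, (S.cls γ).card = S.s → γ = S.f z

/-- A solo neighbor `y ∈ S_z` is useful if it is nonadjacent to some other solo
neighbor of `z`. -/
def Useful (z y : V) : Prop := ∃ y' ∈ S.soloSet z, y' ≠ y ∧ ¬ S.G.Adj y y'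

/-- `S_z*`, the set of useful solo neighbors of `z`. -/
noncomputable def soloStar (z : V) : Finset V := (S.soloSet z).filter (S.Useful z)

/-- (O1) : among all SE `L`-colorings of `G' = G - p`, `f` maximizes `|A|`. -/
def O1 : Prop :=
  ∀ f' : V → ℕ, IsSE S.G S.r S.L S.p f' →
    (aSet S.G S.L S.p f' S.s).card ≤ S.A.card

/-- (O2) : subject to (O1), `f` maximizes the number of accessible colors with
nonempty classes. -/
def O2 : Prop :=
  ∀ f' : V → ℕ, IsSE S.G S.r S.L S.p f' →
    (aSet S.G S.L S.p f' S.s).card = S.A.card →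
    ((lamSet S.G S.L S.p f' S.s).filter (fun γ => (classOf S.p f' γ).Nonempty)).card
      ≤ (S.Λ.filter (fun γ => (S.cls γ).Nonempty)).card

end Setup

theorem _root_.List.exists_nodup_isChain_of_reflTransGen {α : Type*} {r : α → α → Prop}
    {a b : α} (h : Relation.ReflTransGen r a b) :
    ∃ l, List.IsChain r (a :: l) ∧ (a :: l).Nodup ∧
      (a :: l).getLast (List.cons_ne_nil _ _) = b := by
  induction h using Relation.ReflTransGen.head_induction_on with
  | refl => exact ⟨[], by simp, by simp, rfl⟩
  | @head a c hac _ ih =>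
    obtain ⟨l, hchain, hnodup, hlast⟩ := ih
    by_cases ha : a ∈ c :: l
    · -- cut the loop at the later occurrence of `a`
      obtain ⟨l₁, l₂, hsplit⟩ := List.append_of_mem ha
      rw [hsplit] at hchain hnodup
      refine ⟨l₂, hchain.right_of_append, hnodup.of_append_right, ?_⟩
      rw [← hlast, List.getLast_congr _ (by simp) hsplit, List.getLast_append_of_ne_nil]
    · exact ⟨c :: l, List.isChain_cons_cons.mpr ⟨hac, hchain⟩,
        List.nodup_cons.mpr ⟨ha, hnodup⟩, by rwa [List.getLast_cons_cons]⟩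

theorem _root_.Finset.card_filter_eq_ite_of_injOn {α β : Type*} [DecidableEq β] {g : α → β}
    {M : Finset α} (hg : Set.InjOn g M) (γ : β) :
    (M.filter (fun v => g v = γ)).card = if γ ∈ M.image g then 1 else 0 := by
  rw [← Finset.card_image_of_injOn (hg.mono (Finset.coe_subset.mpr (Finset.filter_subset _ _))),
    show (M.filter fun v => g v = γ).image g = (M.image g).filter (· = γ) by
      rw [Finset.filter_image], Finset.filter_eq']
  split_ifs <;> simp

theorem _root_.Finset.injOn_insert_of_notMem_image {α β : Type*} [DecidableEq α] [DecidableEq β]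
    {k : α → β} {s : Finset α} {a : α} (hs : Set.InjOn k s) (ha : k a ∉ s.image k) :
    Set.InjOn k (insert a s : Finset α) := by
  rw [Finset.coe_insert, Set.injOn_insert fun h => ha (Finset.mem_image_of_mem k h)]
  exact ⟨hs, by simpa using ha⟩

theorem _root_.Finset.image_insert_insert_update_update {α β : Type*} [DecidableEq α]
    [DecidableEq β] {k : α → β} {s : Finset α} {y z : α} {a b : β} (hy : y ∉ s)
    (hz : z ∉ s) (hyz : y ≠ z) :
    (insert z (insert y s)).image (Function.update (Function.update k y a) z b) =
      insert b (insert a (s.image k)) := by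
  rw [Finset.image_insert, Finset.image_insert, Function.update_self, Function.update_of_ne hyz,
    Function.update_self, Finset.image_congr fun v hv => ?_]
  rw [Function.update_of_ne (ne_of_mem_of_not_mem hv hz),
    Function.update_of_ne (ne_of_mem_of_not_mem hv hy)]

theorem mem_colorSet_of_mem [Fintype V] {L : V → Finset ℕ} {v : V} {γ : ℕ} (h : γ ∈ L v) :
    γ ∈ colorSet L :=
  Finset.mem_biUnion.mpr ⟨v, Finset.mem_univ v, h⟩

section Recoloring

variable {G : SimpleGraph V} {L : V → Finset ℕ} {p : V} {f g : V → ℕ} {M : Finset V}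

def IsListColoring (G : SimpleGraph V) (L : V → Finset ℕ) (p : V) (f : V → ℕ) : Prop :=
  (∀ v, v ≠ p → f v ∈ L v) ∧ ∀ u v, u ≠ p → v ≠ p → G.Adj u v → f u ≠ f v

/-- A simultaneous recoloring of the vertices of `M`, moving at most one vertex out of and
one into each class. -/
structure IsRecoloring (G : SimpleGraph V) (L : V → Finset ℕ) (p : V) (f g : V → ℕ)
    (M : Finset V) : Prop where
  notMem : p ∉ M
  eqOn_compl : ∀ v ∉ M, g v = f v
  injOn_left : Set.InjOn f M
  injOn_right : Set.InjOn g M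
  mem_list : ∀ v ∈ M, g v ∈ L v
  not_adj : ∀ v ∈ M, ∀ u ∉ M, u ≠ p → f u = g v → ¬ G.Adj v u

theorem IsRecoloring.isListColoring (hR : IsRecoloring G L p f g M)
    (hf : IsListColoring G L p f) : IsListColoring G L p g := by
  refine ⟨fun v hv => ?_, fun u v hu hv hadj heq => ?_⟩
  · by_cases hvM : v ∈ M
    · exact hR.mem_list v hvM
    · exact hR.eqOn_compl v hvM ▸ hf.1 v hv
  by_cases huM : u ∈ M <;> by_cases hvM : v ∈ M
  · exact hadj.ne (hR.injOn_right huM hvM heq)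
  · exact hR.not_adj u huM v hvM hv ((hR.eqOn_compl v hvM).symm.trans heq.symm) hadj
  · exact hR.not_adj v hvM u huM hu ((hR.eqOn_compl u huM).symm.trans heq) hadj.symm
  · exact hf.2 u v hu hv hadj (by rwa [hR.eqOn_compl u huM, hR.eqOn_compl v hvM] at heq)

end Recoloring

section ColorClasses

variable [Fintype V] [DecidableEq V] {G : SimpleGraph V} {L : V → Finset ℕ} {p : V}
  {f g : V → ℕ} {M : Finset V} {r s : ℕ}

theorem mem_classOf {v : V} {γ : ℕ} : v ∈ classOf p f γ ↔ v ≠ p ∧ f v = γ := by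
  simp [classOf]

theorem accessible_of_card_lt {γ : ℕ} (hγ : γ ∈ colorSet L) (h : (classOf p f γ).card < s) :
    Accessible G L p f s γ :=
  ⟨hγ, γ, hγ, .refl, h⟩

theorem Accessible.of_reflTransGen {γ δ : ℕ} (hγ : γ ∈ colorSet L)
    (hpath : Relation.ReflTransGen (Arc G L p f) γ δ) (hδ : Accessible G L p f s δ) :
    Accessible G L p f s γ := by
  obtain ⟨_, ε, hε, hp, hc⟩ := hδ
  exact ⟨hγ, ε, hε, hpath.trans hp, hc⟩

theorem card_aSet_eq_sum :
    (aSet G L p f s).card = ∑ γ ∈ lamSet G L p f s, (classOf p f γ).card := by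
  rw [aSet, Finset.card_biUnion]
  exact fun _ _ _ _ hne => Finset.disjoint_left.mpr fun _ hv hv' =>
    hne ((mem_classOf.mp hv).2.symm.trans (mem_classOf.mp hv').2)

theorem sum_card_classOf_le_card_aSet {T : Finset ℕ} (hT : T ⊆ lamSet G L p f s) :
    ∑ γ ∈ T, (classOf p f γ).card ≤ (aSet G L p f s).card := by
  rw [card_aSet_eq_sum]
  exact Finset.sum_le_sum_of_subset hT

theorem card_aSet_lt_of_card_transfer {β μ : ℕ}
    (hcard : ∀ γ, (classOf p g γ).card + (if γ = β then 1 else 0) =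
      (classOf p f γ).card + (if γ = μ then 1 else 0))
    (hβ : β ∉ lamSet G L p f s) (hμ : μ ∈ lamSet G L p f s)
    (hsub : lamSet G L p f s ⊆ lamSet G L p g s) :
    (aSet G L p f s).card < (aSet G L p g s).card := by
  have hsum := Finset.sum_congr rfl fun γ (_ : γ ∈ lamSet G L p f s) => hcard γ
  rw [Finset.sum_add_distrib, Finset.sum_add_distrib, Finset.sum_ite_eq', Finset.sum_ite_eq',
    if_neg hβ, if_pos hμ] at hsum
  have := sum_card_classOf_le_card_aSet hsub
  rw [card_aSet_eq_sum]
  omega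

theorem card_aSet_lt_of_card_eq (hcard : ∀ γ, (classOf p g γ).card = (classOf p f γ).card)
    {t : ℕ} (ht : t ∉ lamSet G L p f s) (hne : (classOf p g t).Nonempty)
    (hsub : insert t (lamSet G L p f s) ⊆ lamSet G L p g s) :
    (aSet G L p f s).card < (aSet G L p g s).card := by
  have := sum_card_classOf_le_card_aSet hsub
  rw [Finset.sum_insert ht, Finset.sum_congr rfl fun γ _ => hcard γ, ← card_aSet_eq_sum] at this
  have := hne.card_pos
  omega

theorem IsSE.isListColoring (hSE : IsSE G r L p f) : IsListColoring G L p f :=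
  ⟨hSE.1, hSE.2.1⟩

theorem isSE_of_card_eq (hSE : IsSE G r L p f) (hg : IsListColoring G L p g)
    (hcard : ∀ γ, (classOf p g γ).card = (classOf p f γ).card) : IsSE G r L p g := by
  refine ⟨hg.1, hg.2, fun γ => hcard γ ▸ hSE.2.2.1 γ, ?_⟩
  simp only [hcard]
  exact hSE.2.2.2

theorem isSE_of_card_transfer (hSE : IsSE G r L p f) (hg : IsListColoring G L p g) {β μ : ℕ}
    (hcard : ∀ γ, (classOf p g γ).card + (if γ = β then 1 else 0) =
      (classOf p f γ).card + (if γ = μ then 1 else 0))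
    (hβ : β ∈ colorSet L) (hβfull : (classOf p f β).card = sVal V r)
    (hμ : (classOf p f μ).card < sVal V r) : IsSE G r L p g := by
  have hbound := hSE.2.2.1
  refine ⟨hg.1, hg.2, fun γ => ?_, ?_⟩
  · have hγ := hcard γ
    by_cases hγμ : γ = μ
    · subst hγμ
      split_ifs at hγ <;> omega
    · have := hbound γ
      split_ifs at hγ <;> omega
  · set full := fun k : V → ℕ =>
      (colorSet L).filter (fun γ => (classOf p k γ).card = sVal V r)
    have hβmem : β ∈ full f := Finset.mem_filter.mpr ⟨hβ, hβfull⟩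
    have hsub : full g ⊆ insert μ ((full f).erase β) := by
      intro γ hγ
      obtain ⟨hγL, hγs⟩ := Finset.mem_filter.mp hγ
      have hγ := hcard γ
      rw [Finset.mem_insert, Finset.mem_erase, Finset.mem_filter]
      by_cases hγμ : γ = μ
      · exact Or.inl hγμ
      · by_cases hγβ : γ = β
        · subst hγβ
          simp only [if_pos, if_neg hγμ] at hγ
          omega
        · simp only [if_neg hγμ, if_neg hγβ] at hγ
          exact Or.inr ⟨hγβ, hγL, by omega⟩
    calc (full g).card ≤ (insert μ ((full f).erase β)).card := Finset.card_le_card hsub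
      _ ≤ (full f).card := by
        have := Finset.card_erase_add_one hβmem
        have := Finset.card_insert_le μ ((full f).erase β)
        omega
      _ ≤ _ := hSE.2.2.2

theorem card_classOf_eq_card_filter_add (hp : p ∉ M) (hg : ∀ v ∉ M, g v = f v) (γ : ℕ) :
    (classOf p g γ).card =
      (M.filter (fun v => g v = γ)).card + ((classOf p f γ).filter (· ∉ M)).card := by
  rw [← Finset.card_filter_add_card_filter_not (s := classOf p g γ) (· ∈ M)]
  congr 1
  · congr 1
    ext v
    simp only [Finset.mem_filter, mem_classOf]
    exact ⟨fun h => ⟨h.2, h.1.2⟩, fun h => ⟨⟨fun hv => hp (hv ▸ h.1), h.2⟩, h.1⟩⟩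
  · congr 1
    ext v
    simp only [Finset.mem_filter, mem_classOf]
    exact ⟨fun h => ⟨⟨h.1.1, hg v h.2 ▸ h.1.2⟩, h.2⟩,
      fun h => ⟨⟨h.1.1, (hg v h.2).trans h.1.2⟩, h.2⟩⟩

theorem classOf_subset_of_eqOn (hg : ∀ v ∉ M, g v = f v) {γ : ℕ} (hγ : γ ∉ M.image g) :
    classOf p g γ ⊆ classOf p f γ := by
  intro v hv
  rw [mem_classOf] at hv ⊢
  refine ⟨hv.1, ?_⟩
  by_cases hvM : v ∈ M
  · exact absurd (Finset.mem_image.mpr ⟨v, hvM, hv.2⟩) hγ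
  · exact (hg v hvM).symm.trans hv.2

theorem classOf_eq_of_eqOn (hg : ∀ v ∉ M, g v = f v) {γ : ℕ} (hγf : γ ∉ M.image f)
    (hγg : γ ∉ M.image g) : classOf p g γ = classOf p f γ :=
  (classOf_subset_of_eqOn hg hγg).antisymm
    (classOf_subset_of_eqOn (fun v hv => (hg v hv).symm) hγf)

theorem IsRecoloring.card_classOf_add (hR : IsRecoloring G L p f g M) (γ : ℕ) :
    (classOf p g γ).card + (if γ ∈ M.image f then 1 else 0) =
      (classOf p f γ).card + (if γ ∈ M.image g then 1 else 0) := by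
  rw [card_classOf_eq_card_filter_add hR.notMem hR.eqOn_compl,
    card_classOf_eq_card_filter_add (g := f) hR.notMem (fun _ _ => rfl),
    Finset.card_filter_eq_ite_of_injOn hR.injOn_left,
    Finset.card_filter_eq_ite_of_injOn hR.injOn_right]
  ring

theorem IsRecoloring.card_classOf_eq_of_image_eq (hR : IsRecoloring G L p f g M)
    (himg : M.image f = M.image g) (γ : ℕ) :
    (classOf p g γ).card = (classOf p f γ).card := by
  have := hR.card_classOf_add γ
  rw [himg] at this
  omega

theorem IsRecoloring.card_classOf_add_ite_of_insert_image_eq (hR : IsRecoloring G L p f g M)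
    {β μ : ℕ} (hins : insert μ (M.image f) = insert β (M.image g))
    (hμ : μ ∉ M.image f) (hβ : β ∉ M.image g) (γ : ℕ) :
    (classOf p g γ).card + (if γ = β then 1 else 0) =
      (classOf p f γ).card + (if γ = μ then 1 else 0) := by
  have hcount := hR.card_classOf_add γ
  have hmem : γ ∈ insert μ (M.image f) ↔ γ ∈ insert β (M.image g) := by rw [hins]
  simp only [Finset.mem_insert] at hmem
  split_ifs at hcount ⊢ <;> grind

theorem arc_to_original_color (hf : IsListColoring G L p f) {v : V} (hv : v ≠ p)
    (hne : g v ≠ f v) (hnadj : ∀ u, u ≠ p → g u = f v → g u ≠ f u → ¬ G.Adj v u) :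
    Arc G L p g (g v) (f v) := by
  refine ⟨hne, v, mem_classOf.mpr ⟨hv, rfl⟩, hf.1 v hv, fun u hu hadj => ?_⟩
  obtain ⟨hup, hgu⟩ := mem_classOf.mp hu
  by_cases hfu : g u = f u
  · exact hf.2 v u hv hup hadj (hfu ▸ hgu).symm
  · exact hnadj u hup hgu hfu hadj

end ColorClasses

section ShiftPath

variable [Fintype V] [DecidableEq V] {G : SimpleGraph V} {L : V → Finset ℕ} {p : V}
  {f g h : V → ℕ} {M : Finset V} {β δ ε : ℕ} {y z : V}

/-- An order-free encoding of a path `β → ⋯ → δ` of `H` without repeated colors, together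
with witnesses `v ∈ M` of its arcs: shifting each `v` to `g v` takes one vertex out of the class
of `β`, puts one into the class of `δ`, and leaves all other class sizes unchanged. -/
structure IsShiftPath (G : SimpleGraph V) (L : V → Finset ℕ) (p : V) (f g : V → ℕ)
    (M : Finset V) (β δ : ℕ) : Prop where
  notMem : p ∉ M
  injOn_left : Set.InjOn f M
  injOn_right : Set.InjOn g M
  ne : ∀ v ∈ M, f v ≠ g v
  movable : ∀ v ∈ M, MovableTo G L p f v (g v)
  insert_image_eq : insert δ (M.image f) = insert β (M.image g)
  notMem_image_left : δ ∉ M.image f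
  notMem_image_right : β ∉ M.image g

theorem IsShiftPath.empty (β : ℕ) : IsShiftPath G L p f g ∅ β β where
  notMem := Finset.notMem_empty p
  injOn_left := by simp
  injOn_right := by simp
  ne := by simp
  movable := by simp
  insert_image_eq := rfl
  notMem_image_left := by simp
  notMem_image_right := by simp

theorem IsShiftPath.cons {β' : ℕ} {x : V} (hP : IsShiftPath G L p f g M β' δ)
    (hx : x ∈ classOf p f β) (hmov : MovableTo G L p f x β') (hne : β ≠ β')
    (hβ : β ∉ insert δ (M.image f)) :
    IsShiftPath G L p f (Function.update g x β') (insert x M) β δ := by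
  obtain ⟨hxp, hfx⟩ := mem_classOf.mp hx
  have hβf : β ∉ M.image f := fun h => hβ (Finset.mem_insert_of_mem h)
  have hxM : x ∉ M := fun hxM => hβf (hfx ▸ Finset.mem_image_of_mem f hxM)
  have hupd : ∀ v ∈ M, Function.update g x β' v = g v := fun v hv =>
    Function.update_of_ne (ne_of_mem_of_not_mem hv hxM) _ _
  have hβg : β ∉ M.image g := fun h => hβ (hP.insert_image_eq ▸ Finset.mem_insert_of_mem h)
  refine ⟨?_, ?_, ?_, ?_, ?_, ?_, ?_, ?_⟩
  · exact fun h => (Finset.mem_insert.mp h).elim (fun h => hxp h.symm) hP.notMem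
  · exact Finset.injOn_insert_of_notMem_image hP.injOn_left (hfx ▸ hβf)
  · refine Finset.injOn_insert_of_notMem_image
      (hP.injOn_right.congr fun v hv => (hupd v hv).symm) ?_
    rw [Function.update_self, Finset.image_congr hupd]
    exact hP.notMem_image_right
  · intro v hv
    rcases Finset.mem_insert.mp hv with rfl | hv
    · rwa [Function.update_self, hfx]
    · rw [hupd v hv]
      exact hP.ne v hv
  · intro v hv
    rcases Finset.mem_insert.mp hv with rfl | hv
    · rwa [Function.update_self]
    · rw [hupd v hv]
      exact hP.movable v hv
  · rw [Finset.image_insert, Finset.image_insert, Finset.image_congr hupd, hfx,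
      Function.update_self, Finset.insert_comm, hP.insert_image_eq]
  · rw [Finset.image_insert, hfx, Finset.mem_insert, not_or]
    exact ⟨fun h => hβ (h ▸ Finset.mem_insert_self _ _), hP.notMem_image_left⟩
  · rw [Finset.image_insert, Finset.image_congr hupd, Function.update_self, Finset.mem_insert,
      not_or]
    exact ⟨hne, hβg⟩

theorem IsShiftPath.erase (hP : IsShiftPath G L p f g M β δ) {v : V} (hv : v ∈ M)
    (hvδ : g v = δ) : IsShiftPath G L p f g (M.erase v) β (f v) := by
  have hsub : M.erase v ⊆ M := Finset.erase_subset v M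
  have himg : ∀ k : V → ℕ, M.image k = insert (k v) ((M.erase v).image k) := fun k => by
    rw [← Finset.image_insert, Finset.insert_erase hv]
  have hδg : δ ∉ (M.erase v).image g := by
    simp only [Finset.mem_image, Finset.mem_erase, not_exists, not_and]
    exact fun w hw hgw => hw.1 (hP.injOn_right hw.2 hv (hgw.trans hvδ.symm))
  have hδβ : δ ≠ β := fun h =>
    hP.notMem_image_right (h ▸ hvδ ▸ Finset.mem_image_of_mem g hv)
  refine ⟨fun h => hP.notMem (hsub h), hP.injOn_left.mono (Finset.coe_subset.mpr hsub),
    hP.injOn_right.mono (Finset.coe_subset.mpr hsub), fun w hw => hP.ne w (hsub hw),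
    fun w hw => hP.movable w (hsub hw), ?_, ?_,
    fun h => hP.notMem_image_right (Finset.image_subset_image hsub h)⟩
  · have := congrArg (Finset.erase · δ) hP.insert_image_eq
    rw [himg g, hvδ, Finset.insert_comm, Finset.erase_insert hP.notMem_image_left,
      Finset.erase_insert (by simp [hδβ, hδg])] at this
    rw [← himg f, this]
  · simp only [Finset.mem_image, Finset.mem_erase, not_exists, not_and]
    exact fun w hw hfw => hw.1 (hP.injOn_left hw.2 hv hfw)

theorem IsShiftPath.reflTransGen_reverse (hf : IsListColoring G L p f)
    (hP : IsShiftPath G L p f g M β δ) (hgh : ∀ v ∈ M, h v = g v)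
    (hh : ∀ u ∉ M, u ≠ p → h u ∈ M.image f → h u = f u) :
    Relation.ReflTransGen (Arc G L p h) δ β := by
  induction M using Finset.strongInduction generalizing δ with
  | H M ih =>
  by_cases hδβ : δ = β
  · rw [hδβ]
  obtain ⟨v, hv, hvδ⟩ : ∃ v ∈ M, g v = δ := by
    have : δ ∈ insert β (M.image g) := hP.insert_image_eq ▸ Finset.mem_insert_self _ _
    simpa [hδβ] using this
  have hvp : v ≠ p := ne_of_mem_of_not_mem hv hP.notMem
  have harc : Arc G L p h δ (f v) := by
    rw [← hvδ, ← hgh v hv]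
    refine arc_to_original_color hf hvp ((hgh v hv).trans_ne (hP.ne v hv).symm) ?_
    intro u hup hhu hfu
    by_cases huM : u ∈ M
    · rw [hgh u huM] at hhu
      exact fun hadj => (hP.movable u huM).2 v (mem_classOf.mpr ⟨hvp, hhu.symm⟩) hadj.symm
    · exact absurd (hh u huM hup (hhu ▸ Finset.mem_image_of_mem f hv)) hfu
  refine .head harc (ih (M.erase v) (Finset.erase_ssubset hv) (hP.erase hv hvδ)
    (fun w hw => hgh w (Finset.mem_of_mem_erase hw)) fun u hu hup hum => ?_)
  by_cases huv : u = v
  · subst huv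
    rw [hgh u hv, hvδ] at hum
    exact absurd (Finset.image_subset_image (Finset.erase_subset u M) hum)
      hP.notMem_image_left
  · exact hh u (fun huM => hu (Finset.mem_erase.mpr ⟨huv, huM⟩)) hup
      (Finset.image_subset_image (Finset.erase_subset v M) hum)

theorem exists_isShiftPath_of_isChain : ∀ (l : List ℕ) {β δ : ℕ},
    List.IsChain (Arc G L p f) (β :: l) → (β :: l).Nodup →
    (β :: l).getLast (List.cons_ne_nil _ _) = δ →
    ∃ g M, IsShiftPath G L p f g M β δ ∧ (∀ v ∉ M, g v = f v) ∧
      ∀ v ∈ M, f v ∈ β :: l ∧ Relation.ReflTransGen (Arc G L p f) β (f v)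
  | [], β, _, _, _, hlast => ⟨f, ∅, hlast ▸ IsShiftPath.empty β, fun _ _ => rfl, by simp⟩
  | β' :: l, β, δ, hchain, hnodup, hlast => by
    obtain ⟨⟨hne, x, hx, hmov⟩, hchain'⟩ := List.isChain_cons_cons.mp hchain
    obtain ⟨hβ, hnodup'⟩ := List.nodup_cons.mp hnodup
    rw [List.getLast_cons_cons] at hlast
    obtain ⟨g, M, hP, hgf, hcol⟩ := exists_isShiftPath_of_isChain l hchain' hnodup' hlast
    have hxM : x ∉ M := fun hxM => hβ ((mem_classOf.mp hx).2 ▸ (hcol x hxM).1)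
    refine ⟨Function.update g x β', insert x M, hP.cons hx hmov hne ?_, fun v hv => ?_,
      fun v hv => ?_⟩
    · rw [Finset.mem_insert, Finset.mem_image]
      rintro (rfl | ⟨v, hv, rfl⟩)
      · exact hβ (hlast ▸ List.getLast_mem _)
      · exact hβ (hcol v hv).1
    · rw [Finset.mem_insert, not_or] at hv
      rw [Function.update_of_ne hv.1, hgf v hv.2]
    · rcases Finset.mem_insert.mp hv with rfl | hv
      · rw [(mem_classOf.mp hx).2]
        exact ⟨List.mem_cons_self, .refl⟩
      · exact ⟨List.mem_cons_of_mem _ (hcol v hv).1,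
          .head ⟨hne, x, hx, hmov⟩ (hcol v hv).2⟩

theorem exists_isShiftPath_of_reflTransGen (hpath : Relation.ReflTransGen (Arc G L p f) β δ) :
    ∃ g M, IsShiftPath G L p f g M β δ ∧ (∀ v ∉ M, g v = f v) ∧
      ∀ v ∈ M, Relation.ReflTransGen (Arc G L p f) β (f v) := by
  obtain ⟨l, hchain, hnodup, hlast⟩ := List.exists_nodup_isChain_of_reflTransGen hpath
  obtain ⟨g, M, hP, hgf, hcol⟩ := exists_isShiftPath_of_isChain l hchain hnodup hlast
  exact ⟨g, M, hP, hgf, fun v hv => (hcol v hv).2⟩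

theorem IsShiftPath.notMem_close (hP : IsShiftPath G L p f g M β (f y))
    (hfz : f z ∉ insert (f y) (M.image f)) : y ∉ M ∧ z ∉ M ∧ y ≠ z :=
  ⟨fun h => hP.notMem_image_left (Finset.mem_image_of_mem f h),
    fun h => hfz (Finset.mem_insert_of_mem (Finset.mem_image_of_mem f h)),
    fun h => hfz (h ▸ Finset.mem_insert_self _ _)⟩

theorem IsShiftPath.isRecoloring_close (hP : IsShiftPath G L p f g M β (f y))
    (hgf : ∀ v ∉ M, g v = f v) (hyp : y ≠ p) (hzp : z ≠ p) (hyL : f z ∈ L y)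
    (hsolo : ∀ w ∈ classOf p f (f z), G.Adj y w → w = z) (hzε : MovableTo G L p f z ε)
    (hfz : f z ∉ insert (f y) (M.image f)) (hε : ε ∉ insert (f z) (M.image g)) :
    IsRecoloring G L p f (Function.update (Function.update g y (f z)) z ε)
      (insert z (insert y M)) := by
  obtain ⟨hyM, hzM, hyz⟩ := hP.notMem_close hfz
  have hfzg : f z ∉ M.image g := fun h =>
    hfz (hP.insert_image_eq ▸ Finset.mem_insert_of_mem h)
  set h := Function.update (Function.update g y (f z)) z ε with h_def
  have hhz : h z = ε := Function.update_self _ _ _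
  have hhy : h y = f z := by rw [h_def, Function.update_of_ne hyz, Function.update_self]
  have hhM : ∀ v ∈ M, h v = g v := fun v hv => by
    rw [h_def, Function.update_of_ne (ne_of_mem_of_not_mem hv hzM),
      Function.update_of_ne (ne_of_mem_of_not_mem hv hyM)]
  have himg : (insert y M).image h = insert (f z) (M.image g) := by
    rw [Finset.image_insert, hhy, Finset.image_congr hhM]
  refine ⟨?_, fun v hv => ?_, ?_, ?_, fun v hv => ?_, fun v hv u hu hup hfu => ?_⟩
  · simp only [Finset.mem_insert, not_or]
    exact ⟨hzp.symm, hyp.symm, hP.notMem⟩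
  · simp only [Finset.mem_insert, not_or] at hv
    rw [h_def, Function.update_of_ne hv.1, Function.update_of_ne hv.2.1, hgf v hv.2.2]
  · refine Finset.injOn_insert_of_notMem_image (Finset.injOn_insert_of_notMem_image hP.injOn_left
      hP.notMem_image_left) ?_
    rwa [Finset.image_insert]
  · refine Finset.injOn_insert_of_notMem_image (Finset.injOn_insert_of_notMem_image
      (hP.injOn_right.congr fun v hv => (hhM v hv).symm) ?_) ?_
    · rwa [hhy, Finset.image_congr hhM]
    · rwa [himg, hhz]
  · simp only [Finset.mem_insert] at hv
    rcases hv with rfl | rfl | hv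
    · rw [hhz]
      exact hzε.1
    · rwa [hhy]
    · rw [hhM v hv]
      exact (hP.movable v hv).1
  · simp only [Finset.mem_insert, not_or] at hu hv
    rcases hv with rfl | rfl | hv
    · rw [hhz] at hfu
      exact hzε.2 u (mem_classOf.mpr ⟨hup, hfu⟩)
    · rw [hhy] at hfu
      exact fun hadj => hu.1 (hsolo u (mem_classOf.mpr ⟨hup, hfu⟩) hadj)
    · rw [hhM v hv] at hfu
      exact (hP.movable v hv).2 u (mem_classOf.mpr ⟨hup, hfu⟩)

theorem IsShiftPath.reflTransGen_close (hf : IsListColoring G L p f)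
    (hP : IsShiftPath G L p f g M β (f y)) (hgf : ∀ v ∉ M, g v = f v) (hyp : y ≠ p)
    (hfz : f z ∉ insert (f y) (M.image f)) (hε : ε ∉ insert (f y) (M.image f)) :
    Relation.ReflTransGen (Arc G L p (Function.update (Function.update g y (f z)) z ε))
      (f z) β := by
  obtain ⟨hyM, hzM, hyz⟩ := hP.notMem_close hfz
  set h := Function.update (Function.update g y (f z)) z ε with h_def
  have hhz : h z = ε := Function.update_self _ _ _
  have hhy : h y = f z := by rw [h_def, Function.update_of_ne hyz, Function.update_self]
  have hhM : ∀ v ∈ M, h v = g v := fun v hv => by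
    rw [h_def, Function.update_of_ne (ne_of_mem_of_not_mem hv hzM),
      Function.update_of_ne (ne_of_mem_of_not_mem hv hyM)]
  have hcases : ∀ u, u = z ∨ u = y ∨ u ∈ M ∨ h u = f u := fun u => by
    by_cases huz : u = z
    · exact .inl huz
    by_cases huy : u = y
    · exact .inr (.inl huy)
    by_cases huM : u ∈ M
    · exact .inr (.inr (.inl huM))
    · exact .inr (.inr (.inr (by rw [h_def, Function.update_of_ne huz,
        Function.update_of_ne huy, hgf u huM])))
  refine .head ?_ (hP.reflTransGen_reverse hf hhM fun u hu hup hum => ?_)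
  · rw [← hhy]
    refine arc_to_original_color hf hyp
      (hhy ▸ fun h => hfz (h ▸ Finset.mem_insert_self _ _)) fun u hup hhu hfu => ?_
    rcases hcases u with rfl | rfl | huM | hfu'
    · exact absurd (hhz ▸ hhu ▸ Finset.mem_insert_self _ _) hε
    · exact absurd (hhy ▸ hhu ▸ Finset.mem_insert_self _ _) hfz
    · rw [hhM u huM] at hhu
      exact fun hadj => (hP.movable u huM).2 y (mem_classOf.mpr ⟨hyp, hhu.symm⟩) hadj.symm
    · exact absurd hfu' hfu
  · rcases hcases u with rfl | rfl | huM | hfu'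
    · exact absurd (Finset.mem_insert_of_mem (hhz ▸ hum)) hε
    · exact absurd (Finset.mem_insert_of_mem (hhy ▸ hum)) hfz
    · exact absurd huM hu
    · exact hfu'

end ShiftPath

namespace Setup

variable [Fintype V] [DecidableEq V] (S : Setup V)

theorem card_classOf_of_mem_Φ {γ : ℕ} (hγ : γ ∈ S.Φ) :
    (classOf S.p S.f γ).card = S.s := by
  obtain ⟨hγΓ, hγΛ⟩ := Finset.mem_sdiff.mp hγ
  exact (S.hSE.2.2.1 γ).antisymm (not_lt.mp fun hlt =>
    hγΛ (Finset.mem_filter.mpr ⟨hγΓ, accessible_of_card_lt hγΓ hlt⟩))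

theorem notMem_Λ_of_reflTransGen {β γ : ℕ} (hβ : β ∈ S.Φ)
    (hpath : Relation.ReflTransGen (Arc S.G S.L S.p S.f) β γ) : γ ∉ S.Λ := fun hγ =>
  (Finset.mem_sdiff.mp hβ).2 (Finset.mem_filter.mpr ⟨(Finset.mem_sdiff.mp hβ).1,
    (Finset.mem_filter.mp hγ).2.of_reflTransGen (Finset.mem_sdiff.mp hβ).1 hpath⟩)

theorem mem_Φ_of_mem_B {y : V} (hy : y ∈ S.B) : y ≠ S.p ∧ S.f y ∈ S.Φ := by
  obtain ⟨φ, hφ, hyφ⟩ := Finset.mem_biUnion.mp hy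
  exact ⟨(mem_classOf.mp hyφ).1, (mem_classOf.mp hyφ).2 ▸ hφ⟩

variable {S}

theorem SoloVertex.ne_p {z : V} (hz : S.SoloVertex z) : z ≠ S.p := by
  obtain ⟨_, _, hzγ⟩ := Finset.mem_biUnion.mp hz.1
  exact (mem_classOf.mp hzγ).1

theorem SoloVertex.f_mem_Λ {z : V} (hz : S.SoloVertex z) : S.f z ∈ S.Λ := by
  obtain ⟨γ, hγ, hzγ⟩ := Finset.mem_biUnion.mp hz.1
  exact (mem_classOf.mp hzγ).2 ▸ hγ

theorem SoloVertex.card_classOf_lt {z : V} (hz : S.SoloVertex z) {γ : ℕ} (hγ : γ ∈ S.Λ)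
    (hne : γ ≠ S.f z) : (classOf S.p S.f γ).card < S.s :=
  lt_of_le_of_ne (S.hSE.2.2.1 γ) fun h => hne (hz.2.2 γ hγ h)

theorem SoloVertex.lamSet_subset_of_card_le {z : V} {h : V → ℕ} {μ : ℕ}
    (hz : S.SoloVertex z) (hfz : Accessible S.G S.L S.p h S.s (S.f z))
    (hμ : Accessible S.G S.L S.p h S.s μ)
    (hcard : ∀ γ ∈ S.Λ, γ ≠ S.f z → γ ≠ μ →
      (classOf S.p h γ).card ≤ (classOf S.p S.f γ).card) :
    S.Λ ⊆ lamSet S.G S.L S.p h S.s := by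
  intro γ hγ
  have hγΓ := (Finset.mem_filter.mp hγ).1
  refine Finset.mem_filter.mpr ⟨hγΓ, ?_⟩
  by_cases hγz : γ = S.f z
  · exact hγz ▸ hfz
  by_cases hγμ : γ = μ
  · exact hγμ ▸ hμ
  exact accessible_of_card_lt hγΓ
    ((hcard γ hγ hγz hγμ).trans_lt (hz.card_classOf_lt hγ hγz))

theorem exists_isSE_lt_of_movable_to_accessible {z y : V} {β μ : ℕ} {g : V → ℕ}
    {M : Finset V} (hz : S.SoloVertex z) (hy : y ∈ S.soloSet z) (hβ : β ∈ S.Φ)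
    (hmov : MovableTo S.G S.L S.p S.f z β) (hP : IsShiftPath S.G S.L S.p S.f g M β (S.f y))
    (hgf : ∀ v ∉ M, g v = S.f v) (hcol : ∀ γ ∈ insert (S.f y) (M.image S.f), γ ∉ S.Λ)
    (hμ : μ ∈ S.Λ) (hμz : μ ≠ S.f z) (hzμ : MovableTo S.G S.L S.p S.f z μ) :
    ∃ f', IsSE S.G S.r S.L S.p f' ∧ S.A.card < (aSet S.G S.L S.p f' S.s).card := by
  obtain ⟨hyB, -, hzL, hsolo⟩ := Finset.mem_filter.mp hy
  have hyp := (S.mem_Φ_of_mem_B hyB).1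
  obtain ⟨hβΓ, hβΛ⟩ := Finset.mem_sdiff.mp hβ
  have hβμ : β ≠ μ := (ne_of_mem_of_not_mem hμ hβΛ).symm
  have hfz : S.f z ∉ insert (S.f y) (M.image S.f) := fun h => hcol _ h hz.f_mem_Λ
  have hμf : μ ∉ insert (S.f y) (M.image S.f) := fun h => hcol _ h hμ
  have hμg : μ ∉ insert (S.f z) (M.image g) := by
    rw [Finset.mem_insert, not_or]
    exact ⟨hμz, fun h => hcol μ (hP.insert_image_eq ▸ Finset.mem_insert_of_mem h) hμ⟩
  obtain ⟨hyM, hzM, hyz⟩ := hP.notMem_close hfz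
  have hR := hP.isRecoloring_close hgf hyp hz.ne_p hzL hsolo hzμ hfz hμg
  have himh := Finset.image_insert_insert_update_update (k := g) (a := S.f z) (b := μ) hyM hzM hyz
  have hβh : β ∉ (insert z (insert y M)).image
      (Function.update (Function.update g y (S.f z)) z μ) := by
    simp only [himh, Finset.mem_insert, not_or]
    exact ⟨hβμ, fun h => hβΛ (h ▸ hz.f_mem_Λ), hP.notMem_image_right⟩
  have hcard := hR.card_classOf_add_ite_of_insert_image_eq (β := β) (μ := μ)
    (by rw [himh, Finset.image_insert, Finset.image_insert, hP.insert_image_eq,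
      Finset.insert_comm (S.f z) β, Finset.insert_comm μ β])
    (by
      rw [Finset.image_insert, Finset.image_insert]
      exact fun h => (Finset.mem_insert.mp h).elim hμz hμf) hβh
  have hβacc : Accessible S.G S.L S.p (Function.update (Function.update g y (S.f z)) z μ)
      S.s β := by
    refine accessible_of_card_lt hβΓ ?_
    have := hcard β
    rw [if_pos rfl, if_neg hβμ, S.card_classOf_of_mem_Φ hβ] at this
    omega
  have hsub := hz.lamSet_subset_of_card_le
    (hβacc.of_reflTransGen (Finset.mem_filter.mp hz.f_mem_Λ).1
      (hP.reflTransGen_close S.hSE.isListColoring hgf hyp hfz hμf))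
    (hβacc.of_reflTransGen (Finset.mem_filter.mp hμ).1 (.single ⟨hβμ.symm, z,
      mem_classOf.mpr ⟨hz.ne_p, Function.update_self _ _ _⟩, hmov.1,
      fun w hw => hmov.2 w (classOf_subset_of_eqOn hR.eqOn_compl hβh hw)⟩))
    fun γ hγ _ hγμ => by
      have := hcard γ
      rw [if_neg (ne_of_mem_of_not_mem hγ hβΛ), if_neg hγμ] at this
      omega
  exact ⟨_, isSE_of_card_transfer S.hSE (hR.isListColoring S.hSE.isListColoring)
    hcard hβΓ (S.card_classOf_of_mem_Φ hβ) (hz.card_classOf_lt hμ hμz),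
    card_aSet_lt_of_card_transfer hcard hβΛ hμ hsub⟩

theorem SoloVertex.accessible_of_isRecoloring {z : V} {h : V → ℕ} {M : Finset V}
    (hz : S.SoloVertex z) (hA : ∀ μ ∈ S.Λ, μ ≠ S.f z → ¬ MovableTo S.G S.L S.p S.f z μ)
    (hR : IsRecoloring S.G S.L S.p S.f h M) (hzM : z ∈ M) (himg : M.image S.f = M.image h)
    (hΛ : ∀ ν ∈ S.Λ, ν ∈ M.image S.f → ν = S.f z) :
    Accessible S.G S.L S.p h S.s (S.f z) := by
  obtain ⟨hfzΓ, δ, hδΓ, hpath, hδ⟩ := (Finset.mem_filter.mp hz.f_mem_Λ).2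
  by_cases hlight : (classOf S.p S.f (S.f z)).card < S.s
  · exact accessible_of_card_lt hfzΓ (hR.card_classOf_eq_of_image_eq himg _ ▸ hlight)
  -- the first arc out of the full class of `f z` is witnessed by a vertex other than `z`
  rcases hpath.cases_head with heq | ⟨ν, ⟨hne, x, hx, hxν⟩, hrest⟩
  · exact absurd (heq ▸ hδ) hlight
  have hνΓ := mem_colorSet_of_mem hxν.1
  have hνΛ : ν ∈ S.Λ := Finset.mem_filter.mpr ⟨hνΓ, hνΓ, δ, hδΓ, hrest, hδ⟩
  have hνf : ν ∉ M.image S.f := fun h => hne (hΛ ν hνΛ h).symm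
  have hcls := classOf_eq_of_eqOn (p := S.p) hR.eqOn_compl hνf (himg ▸ hνf)
  obtain ⟨hxp, hfx⟩ := mem_classOf.mp hx
  have hxM : x ∉ M := fun hxM => hA ν hνΛ hne.symm (hR.injOn_left hxM hzM hfx ▸ hxν)
  exact (accessible_of_card_lt hνΓ (hcls ▸ hz.card_classOf_lt hνΛ hne.symm)).of_reflTransGen
    hfzΓ (.single ⟨hne, x, mem_classOf.mpr ⟨hxp, (hR.eqOn_compl x hxM).trans hfx⟩, hxν.1,
      hcls ▸ hxν.2⟩)

theorem arc_of_mem_soloSet {z y y' : V} {h : V → ℕ} {M : Finset V}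
    (hR : IsRecoloring S.G S.L S.p S.f h M) (hyM : y ∈ M) (hzM : z ∈ M) (hhy : h y = S.f z)
    (hy' : y' ∈ S.soloSet z) (hyy' : ¬ S.G.Adj y y') (hne : h y' ≠ S.f z) :
    Arc S.G S.L S.p h (h y') (S.f z) := by
  obtain ⟨hy'B, -, hzL, hsolo⟩ := Finset.mem_filter.mp hy'
  refine ⟨hne, y', mem_classOf.mpr ⟨(S.mem_Φ_of_mem_B hy'B).1, rfl⟩, hzL,
    fun w hw hadj => ?_⟩
  obtain ⟨hwp, hhw⟩ := mem_classOf.mp hw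
  by_cases hwM : w ∈ M
  · exact hyy' ((hR.injOn_right hwM hyM (hhw.trans hhy.symm)) ▸ hadj).symm
  · exact ne_of_mem_of_not_mem hzM hwM
      (hsolo w (mem_classOf.mpr ⟨hwp, (hR.eqOn_compl w hwM).symm.trans hhw⟩) hadj).symm

theorem exists_isSE_lt_of_not_movable_to_accessible {z y : V} {β : ℕ} {g : V → ℕ}
    {M : Finset V} (hz : S.SoloVertex z) (hy : y ∈ S.soloStar z) (hβ : β ∈ S.Φ)
    (hmov : MovableTo S.G S.L S.p S.f z β) (hP : IsShiftPath S.G S.L S.p S.f g M β (S.f y))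
    (hgf : ∀ v ∉ M, g v = S.f v) (hcol : ∀ γ ∈ insert (S.f y) (M.image S.f), γ ∉ S.Λ)
    (hA : ∀ μ ∈ S.Λ, μ ≠ S.f z → ¬ MovableTo S.G S.L S.p S.f z μ) :
    ∃ f', IsSE S.G S.r S.L S.p f' ∧ S.A.card < (aSet S.G S.L S.p f' S.s).card := by
  obtain ⟨hyS, y', hy'S, hy'y, hyy'⟩ := Finset.mem_filter.mp hy
  obtain ⟨hyB, -, hzL, hsolo⟩ := Finset.mem_filter.mp hyS
  obtain ⟨hy'p, hfy'⟩ := S.mem_Φ_of_mem_B (Finset.mem_filter.mp hy'S).1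
  have hfz : S.f z ∉ insert (S.f y) (M.image S.f) := fun h => hcol _ h hz.f_mem_Λ
  have hβfz : β ∉ insert (S.f z) (M.image g) := fun h => (Finset.mem_insert.mp h).elim
    (fun h => (Finset.mem_sdiff.mp hβ).2 (h ▸ hz.f_mem_Λ)) hP.notMem_image_right
  obtain ⟨hyM, hzM, hyz⟩ := hP.notMem_close hfz
  have hR := hP.isRecoloring_close hgf (S.mem_Φ_of_mem_B hyB).1 hz.ne_p hzL hsolo hmov hfz hβfz
  set h := Function.update (Function.update g y (S.f z)) z β with h_def
  have hhy : h y = S.f z := by rw [h_def, Function.update_of_ne hyz, Function.update_self]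
  have himf : (insert z (insert y M)).image S.f = insert (S.f z) (insert (S.f y) (M.image S.f)) :=
    by rw [Finset.image_insert, Finset.image_insert]
  have himg : (insert z (insert y M)).image S.f = (insert z (insert y M)).image h := by
    rw [Finset.image_insert_insert_update_update hyM hzM hyz, himf, hP.insert_image_eq,
      Finset.insert_comm]
  have hΛ : ∀ ν ∈ S.Λ, ν ∈ (insert z (insert y M)).image S.f → ν = S.f z :=
    fun ν hν hνM =>
    ((Finset.mem_insert.mp (himf ▸ hνM)).resolve_right fun h => hcol ν h hν)
  have hyM' : y ∈ insert z (insert y M) := Finset.mem_insert_of_mem (Finset.mem_insert_self _ _)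
  have hfzacc := hz.accessible_of_isRecoloring hA hR (Finset.mem_insert_self _ _) himg hΛ
  -- `y'` has been pushed into a color outside `Λ`, and now reaches the class of `f z`
  have ht : h y' ∉ S.Λ := by
    by_cases hy'M : y' ∈ insert z (insert y M)
    · exact fun htΛ => hy'y (hR.injOn_right hy'M hyM'
        ((hΛ _ htΛ (himg ▸ Finset.mem_image_of_mem h hy'M)).trans hhy.symm))
    · exact hR.eqOn_compl y' hy'M ▸ (Finset.mem_sdiff.mp hfy').2
  have htΓ := mem_colorSet_of_mem ((hR.isListColoring S.hSE.isListColoring).1 y' hy'p)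
  have harc := arc_of_mem_soloSet hR hyM' (Finset.mem_insert_self _ _) hhy hy'S hyy'
    fun h => ht (h ▸ hz.f_mem_Λ)
  have hcard := hR.card_classOf_eq_of_image_eq himg
  exact ⟨h, isSE_of_card_eq S.hSE (hR.isListColoring S.hSE.isListColoring) hcard,
    card_aSet_lt_of_card_eq hcard ht ⟨y', mem_classOf.mpr ⟨hy'p, rfl⟩⟩
      (Finset.insert_subset
        (Finset.mem_filter.mpr ⟨htΓ, hfzacc.of_reflTransGen htΓ (.single harc)⟩)
        (hz.lamSet_subset_of_card_le hfzacc hfzacc fun γ _ _ _ => (hcard γ).le))⟩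

end Setup

theorem lemma_S_star_cap_D_general {V : Type*} [Fintype V] [DecidableEq V] (S : Setup V)
    (hO1 : S.O1) (z y : V) (hz : S.SoloVertex z)
    (hy : y ∈ S.soloStar z) (β : ℕ) (hβ : β ∈ S.Φ)
    (hmov : MovableTo S.G S.L S.p S.f z β) :
    ¬ Relation.ReflTransGen (Arc S.G S.L S.p S.f) β (S.f y) := by
  intro hpath
  obtain ⟨g, M, hP, hgf, hreach⟩ := exists_isShiftPath_of_reflTransGen hpath
  have hcol : ∀ γ ∈ insert (S.f y) (M.image S.f), γ ∉ S.Λ := by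
    simp only [Finset.mem_insert, Finset.mem_image]
    rintro γ (rfl | ⟨v, hv, rfl⟩)
    exacts [S.notMem_Λ_of_reflTransGen hβ hpath, S.notMem_Λ_of_reflTransGen hβ (hreach v hv)]
  obtain ⟨f', hSE', hlt⟩ :
      ∃ f', IsSE S.G S.r S.L S.p f' ∧ S.A.card < (aSet S.G S.L S.p f' S.s).card := by
    by_cases hA : ∃ μ ∈ S.Λ, μ ≠ S.f z ∧ MovableTo S.G S.L S.p S.f z μ
    · obtain ⟨μ, hμ, hμz, hzμ⟩ := hA
      exact Setup.exists_isSE_lt_of_movable_to_accessible hz (Finset.mem_filter.mp hy).1 hβ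
        hmov hP hgf hcol hμ hμz hzμ
    · push Not at hA
      exact Setup.exists_isSE_lt_of_not_movable_to_accessible hz hy hβ hmov hP hgf hcol hA
  exact (hO1 f' hSE').not_gt hlt

/-- Lemma 7 (under the Setup, (†), (O1) and (O2)): if `z` is a solo vertex,
`y ∈ S_z*` is a useful solo neighbor of `z` and `z` is movable to the class `β̃`
for some `β ∈ Φ`, then the digraph `H` has no directed path from `β` to `f(y)`. -/
theorem lemma_S_star_cap_D {V : Type*} [Fintype V] [DecidableEq V] (S : Setup V)
    (hO1 : S.O1) (hO2 : S.O2) (z y : V) (hz : S.SoloVertex z)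
    (hy : y ∈ S.soloStar z) (β : ℕ) (hβ : β ∈ S.Φ)
    (hmov : MovableTo S.G S.L S.p S.f z β) :
    ¬ Relation.ReflTransGen (Arc S.G S.L S.p S.f) β (S.f y) :=
  lemma_S_star_cap_D_general S hO1 z y hz hy β hβ hmov

end EqListColoring
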